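/- Free-flight distance along the separatrix branch W₁ (Remark C.3): let a > b > 0, c = sqrt(a² − b²), λ = (a+c)/(a−c). Let φ₀ ∈ (0, π), ξ₀ = tan(φ₀/2), and φ₁ = 2 arctan(λ ξ₀). Then sqrt( a² (cos φ₀ + cos φ₁)² + b² (sin φ₀ + sin φ₁)² ) = 2a (1 + λ ξ₀²)² / ( (1 + ξ₀²)(1 + λ² ξ₀²) ). -/

import Mathlib

/-!
In the half-angle parameter `ξ = tan (φ/2)` the ellipse point is
`(a (1 - ξ²)/(1 + ξ²), 2 b ξ/(1 + ξ²))`, so the squared chord from `γ(φ₀)` to `-γ(φ₁)` is a rational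
function of `ξ₀` and `η = λ ξ₀`; it factors as `4 (1 + ξ₀η)² (a² (1 - ξ₀η)² + b² (ξ₀ + η)²)` over
`((1 + ξ₀²)(1 + η²))²`. The focal relation `b² (1 + λ)² = 4 a² λ` turns the second factor into the
perfect square `a² (1 + λ ξ₀²)²`, and the chord length is the square root of a square.
-/

open Real

namespace Real

theorem cos_two_mul_arctan (x : ℝ) : cos (2 * arctan x) = (1 - x ^ 2) / (1 + x ^ 2) := by
  rw [cos_two_mul, cos_sq_arctan]
  field_simp
  ring

theorem sin_two_mul_arctan (x : ℝ) : sin (2 * arctan x) = 2 * x / (1 + x ^ 2) := by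
  rw [sin_two_mul, ← tan_mul_cos (cos_arctan_pos x).ne', tan_arctan,
    show 2 * (x * cos (arctan x)) * cos (arctan x) = 2 * x * cos (arctan x) ^ 2 by ring,
    cos_sq_arctan, mul_one_div]

theorem two_mul_arctan_tan_half {φ : ℝ} (h₁ : -π < φ) (h₂ : φ < π) :
    2 * arctan (tan (φ / 2)) = φ := by
  rw [arctan_tan (by linarith) (by linarith)]
  ring

end Real

theorem chord_sq_two_mul_arctan (a b x y : ℝ) :
    a ^ 2 * (cos (2 * arctan x) + cos (2 * arctan y)) ^ 2
        + b ^ 2 * (sin (2 * arctan x) + sin (2 * arctan y)) ^ 2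
      = 4 * (1 + x * y) ^ 2 * (a ^ 2 * (1 - x * y) ^ 2 + b ^ 2 * (x + y) ^ 2)
          / ((1 + x ^ 2) * (1 + y ^ 2)) ^ 2 := by
  simp only [cos_two_mul_arctan, sin_two_mul_arctan]
  field_simp
  ring

theorem focal_ratio_relation {a b c : ℝ} (hc : c ^ 2 = a ^ 2 - b ^ 2) (hca : a - c ≠ 0) :
    b ^ 2 * (1 + (a + c) / (a - c)) ^ 2 = 4 * a ^ 2 * ((a + c) / (a - c)) := by
  field_simp
  linear_combination 4 * a ^ 2 * hc

theorem chord_sq_two_mul_arctan_mul {a b lam : ℝ} (hfocal : b ^ 2 * (1 + lam) ^ 2 = 4 * a ^ 2 * lam)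
    (x : ℝ) :
    a ^ 2 * (cos (2 * arctan x) + cos (2 * arctan (lam * x))) ^ 2
        + b ^ 2 * (sin (2 * arctan x) + sin (2 * arctan (lam * x))) ^ 2
      = (2 * a * (1 + lam * x ^ 2) ^ 2 / ((1 + x ^ 2) * (1 + lam ^ 2 * x ^ 2))) ^ 2 := by
  rw [chord_sq_two_mul_arctan]
  field_simp
  linear_combination 4 * x ^ 2 * (1 + lam * x ^ 2) ^ 2 * hfocal

/-- Remark C.3: free-flight distance along the separatrix branch
`W₁`.  With `ξ₀ = tan(φ₀/2)` and `φ₁ = 2 arctan(λ ξ₀)`, the chord length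
`sqrt(a²(cos φ₀ + cos φ₁)² + b²(sin φ₀ + sin φ₁)²)` equals
`2a(1 + λ ξ₀²)² / ((1 + ξ₀²)(1 + λ² ξ₀²))`. -/
theorem free_flight_distance_W1
    (a b : ℝ) (hb : 0 < b) (hab : b < a)
    (c lam : ℝ) (hc : c = Real.sqrt (a ^ 2 - b ^ 2)) (hlam : lam = (a + c) / (a - c))
    (φ₀ : ℝ) (hφ₀ : φ₀ ∈ Set.Ioo 0 Real.pi)
    (ξ₀ : ℝ) (hξ₀ : ξ₀ = Real.tan (φ₀ / 2))
    (φ₁ : ℝ) (hφ₁ : φ₁ = 2 * Real.arctan (lam * ξ₀)) :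
    Real.sqrt (a ^ 2 * (Real.cos φ₀ + Real.cos φ₁) ^ 2 +
        b ^ 2 * (Real.sin φ₀ + Real.sin φ₁) ^ 2)
      = 2 * a * (1 + lam * ξ₀ ^ 2) ^ 2 / ((1 + ξ₀ ^ 2) * (1 + lam ^ 2 * ξ₀ ^ 2)) := by
  have ha : 0 < a := hb.trans hab
  have hc_sq : c ^ 2 = a ^ 2 - b ^ 2 := by rw [hc, sq_sqrt (by nlinarith)]
  have hca : a - c ≠ 0 := by nlinarith
  have hφ₀' : φ₀ = 2 * arctan ξ₀ := by
    rw [hξ₀, two_mul_arctan_tan_half (by linarith [hφ₀.1, pi_pos]) hφ₀.2]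
  rw [hφ₀', hφ₁, chord_sq_two_mul_arctan_mul (hlam ▸ focal_ratio_relation hc_sq hca)]
  exact sqrt_sq (by positivity)
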